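/- With the two-process CCA setup (H, C12 with ‖C12‖ < 1, C21 = C12*, Q, H(Q), M1, M2 as before), let L2 = M2 ∩ M1^⊥ in H(Q) and define B = P_{L1|M2} (P_{L2|M2})⁻¹ where L1 = M1. Then for h = (0, f̃2) ∈ L2, B h = (C12 C22.1⁻¹ f̃2, C21 C12 C22.1⁻¹ f̃2), where C22.1 = I − C21 C12. -/

import Mathlib

open scoped RealInnerProductSpace
open ContinuousLinearMap

/-- The element of `H₀ = H × H` (with the ℓ² product structure) with components `a, b`. -/
noncomputable def mk2 {H : Type*} (a b : H) : WithLp 2 (H × H) := (WithLp.equiv 2 (H × H)).symm (a, b)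

/-- First component. -/
noncomputable def pr1 {H : Type*} (p : WithLp 2 (H × H)) : H := (WithLp.equiv 2 (H × H) p).1

/-- Second component. -/
noncomputable def pr2 {H : Type*} (p : WithLp 2 (H × H)) : H := (WithLp.equiv 2 (H × H) p).2

/-! The `H(Q)` inner product `⟪h, Q⁻¹ h'⟫₀` is computed through `⟪Q r, Q⁻¹ y⟫₀ = ⟪r, y⟫₀`, which
holds because `Q` is symmetric. Each vector paired against `Q⁻¹ (…)` in the theorem is `Q` of an
explicit vector: `(C12 K f̃, K f̃) - (0, f̃) = Q (C12 K f̃, 0)` since `K f̃ - C21 C12 K f̃ = f̃`,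
`(C12 x, x) = Q (0, x)`, and `(C12 K f̃, K f̃) - (C12 K f̃, C21 C12 K f̃) = Q (-C12 K f̃, K f̃)`.
The three claims then reduce to inner products in `H × H`. -/

lemma mk2_inj {H : Type*} {a b c d : H} : mk2 a b = mk2 c d ↔ a = c ∧ b = d := by
  simp [mk2, Prod.ext_iff]

lemma mk2_sub {H : Type*} [AddCommGroup H] (a b c d : H) :
    mk2 a b - mk2 c d = mk2 (a - c) (b - d) := rfl

lemma inner_mk2 {H : Type*} [NormedAddCommGroup H] [InnerProductSpace ℝ H] (a b c d : H) :
    ⟪mk2 a b, mk2 c d⟫ = ⟪a, c⟫ + ⟪b, d⟫ := by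
  simp [mk2, WithLp.prod_inner_apply]

lemma LinearMap.IsSymmetric.inner_apply_comp_rightInverse {E : Type*} [NormedAddCommGroup E]
    [InnerProductSpace ℝ E] {Q Qinv : E →L[ℝ] E} (hQ : (Q : E →ₗ[ℝ] E).IsSymmetric)
    (hQQi : Q ∘L Qinv = 1) (r y : E) : ⟪Q r, Qinv y⟫ = ⟪r, y⟫ := by
  have hy : Q (Qinv y) = y := by simpa using congrArg (fun T => T y) hQQi
  rw [← congrArg (inner ℝ r) hy]
  exact hQ r (Qinv y)

section BlockOperator

variable {H : Type*} [NormedAddCommGroup H] [InnerProductSpace ℝ H] [CompleteSpace H]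
  {C12 : H →L[ℝ] H} {Q : WithLp 2 (H × H) →L[ℝ] WithLp 2 (H × H)}

lemma apply_mk2_of_block
    (hQ : ∀ p : WithLp 2 (H × H), Q p = mk2 (pr1 p + C12 (pr2 p)) (adjoint C12 (pr1 p) + pr2 p))
    (a b : H) : Q (mk2 a b) = mk2 (a + C12 b) (adjoint C12 a + b) :=
  hQ (mk2 a b)

lemma isSymmetric_of_block
    (hQ : ∀ p : WithLp 2 (H × H), Q p = mk2 (pr1 p + C12 (pr2 p)) (adjoint C12 (pr1 p) + pr2 p)) :
    (Q : WithLp 2 (H × H) →ₗ[ℝ] WithLp 2 (H × H)).IsSymmetric := by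
  intro r s
  rw [coe_coe, hQ r, hQ s]
  change ⟪mk2 _ _, mk2 (pr1 s) (pr2 s)⟫ = ⟪mk2 (pr1 r) (pr2 r), mk2 _ _⟫
  simp only [inner_mk2, inner_add_left, inner_add_right, adjoint_inner_left, adjoint_inner_right]
  ring

end BlockOperator

theorem B_formula_general
    {H : Type*} [NormedAddCommGroup H] [InnerProductSpace ℝ H] [CompleteSpace H]
    (C12 K : H →L[ℝ] H)
    (Q Qinv : WithLp 2 (H × H) →L[ℝ] WithLp 2 (H × H))
    (hQ : ∀ p : WithLp 2 (H × H),
      Q p = mk2 (pr1 p + C12 (pr2 p)) (ContinuousLinearMap.adjoint C12 (pr1 p) + pr2 p))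
    (hQQi : Q ∘L Qinv = 1)
    (hK1 : ((1 : H →L[ℝ] H) - ContinuousLinearMap.adjoint C12 ∘L C12) ∘L K = 1) :
    ∀ ftilde : H,
      -- `P_{L2} (C12 K f̃2, K f̃2) = (0, f̃2)`:
      (∀ g : H,
        ⟪mk2 (C12 (K ftilde)) (K ftilde) - mk2 0 ftilde, Qinv (mk2 0 g)⟫ = 0) ∧
      -- uniqueness: any `(C12 f2', f2') ∈ M2` with `P_{L2}`-projection `(0, f̃2)` is `m`:
      (∀ f2' : H,
        (∀ g : H, ⟪mk2 (C12 f2') f2' - mk2 0 ftilde, Qinv (mk2 0 g)⟫ = 0) →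
        f2' = K ftilde) ∧
      -- `B (0, f̃2) = P_{L1} m = (C12 K f̃2, C21 C12 K f̃2)`:
      (∀ f1 : H,
        ⟪mk2 (C12 (K ftilde)) (K ftilde)
            - mk2 (C12 (K ftilde)) (ContinuousLinearMap.adjoint C12 (C12 (K ftilde))),
          Qinv (mk2 f1 (ContinuousLinearMap.adjoint C12 f1))⟫ = 0) := by
  have hQinner := (isSymmetric_of_block hQ).inner_apply_comp_rightInverse hQQi
  intro f
  have hKf : adjoint C12 (C12 (K f)) = K f - f := by
    have hK1f : K f - adjoint C12 (C12 (K f)) = f := by simpa using congrArg (fun T => T f) hK1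
    exact eq_sub_of_add_eq' (sub_eq_iff_eq_add.mp hK1f).symm
  have hproj : Q (mk2 (C12 (K f)) 0) = mk2 (C12 (K f)) (K f) - mk2 0 f := by
    rw [apply_mk2_of_block hQ, mk2_sub, mk2_inj]
    constructor
    · simp
    · rw [add_zero, hKf]
  have hL2 : ∀ g : H, ⟪mk2 (C12 (K f)) (K f) - mk2 0 f, Qinv (mk2 0 g)⟫ = 0 := by
    intro g
    rw [← hproj, hQinner, inner_mk2]
    simp
  refine ⟨hL2, fun f2' h => ?_, fun f1 => ?_⟩
  · set d := f2' - K f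
    have hM2 : Q (mk2 0 d) = (mk2 (C12 f2') f2' - mk2 0 f) - (mk2 (C12 (K f)) (K f) - mk2 0 f) := by
      simp [apply_mk2_of_block hQ, mk2_sub, d]
    have horth : ⟪d, d⟫ = 0 := calc
      ⟪d, d⟫ = ⟪Q (mk2 0 d), Qinv (mk2 0 d)⟫ := by rw [hQinner, inner_mk2]; simp
      _ = 0 := by rw [hM2, inner_sub_left, h, hL2, sub_zero]
    exact sub_eq_zero.mp (inner_self_eq_zero.mp horth)
  · have hB : mk2 (C12 (K f)) (K f) - mk2 (C12 (K f)) (adjoint C12 (C12 (K f)))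
        = Q (mk2 (-C12 (K f)) (K f)) := by
      rw [apply_mk2_of_block hQ, mk2_sub, mk2_inj]
      constructor
      · simp
      · rw [map_neg]; abel
    rw [hB, hQinner, inner_mk2, adjoint_inner_right]
    simp

/-- Corollary A.4: with `K = C22.1⁻¹ = (I − C21 C12)⁻¹`, for `h = (0, f̃2) ∈ L2`, the unique
`m ∈ M2` with `P_{L2} m = h` is `m = (C12 K f̃2, K f̃2)`, and
`B h = P_{L1} m = (C12 K f̃2, C21 C12 K f̃2)`-- projections being taken in the `H(Q)` inner
product `⟪h, Q⁻¹ h'⟫₀`, with `L1 = M1 = {(f1, C21 f1)}` and `L2 = {(0, g)}`. -/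
theorem B_formula
    {H : Type*} [NormedAddCommGroup H] [InnerProductSpace ℝ H] [CompleteSpace H]
    (C12 K : H →L[ℝ] H) (hC : ‖C12‖ < 1)
    (Q Qinv : WithLp 2 (H × H) →L[ℝ] WithLp 2 (H × H))
    (hQ : ∀ p : WithLp 2 (H × H),
      Q p = mk2 (pr1 p + C12 (pr2 p)) (ContinuousLinearMap.adjoint C12 (pr1 p) + pr2 p))
    (hQQi : Q ∘L Qinv = 1) (hQiQ : Qinv ∘L Q = 1)
    (hK1 : ((1 : H →L[ℝ] H) - ContinuousLinearMap.adjoint C12 ∘L C12) ∘L K = 1)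
    (hK2 : K ∘L ((1 : H →L[ℝ] H) - ContinuousLinearMap.adjoint C12 ∘L C12) = 1) :
    ∀ ftilde : H,
      -- `P_{L2} (C12 K f̃2, K f̃2) = (0, f̃2)`:
      (∀ g : H,
        ⟪mk2 (C12 (K ftilde)) (K ftilde) - mk2 0 ftilde, Qinv (mk2 0 g)⟫ = 0) ∧
      -- uniqueness: any `(C12 f2', f2') ∈ M2` with `P_{L2}`-projection `(0, f̃2)` is `m`:
      (∀ f2' : H,
        (∀ g : H, ⟪mk2 (C12 f2') f2' - mk2 0 ftilde, Qinv (mk2 0 g)⟫ = 0) →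
        f2' = K ftilde) ∧
      -- `B (0, f̃2) = P_{L1} m = (C12 K f̃2, C21 C12 K f̃2)`:
      (∀ f1 : H,
        ⟪mk2 (C12 (K ftilde)) (K ftilde)
            - mk2 (C12 (K ftilde)) (ContinuousLinearMap.adjoint C12 (C12 (K ftilde))),
          Qinv (mk2 f1 (ContinuousLinearMap.adjoint C12 f1))⟫ = 0) :=
  B_formula_general C12 K Q Qinv hQ hQQi hK1
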